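/- arXiv:solv-int/9610001 — 4 statements merged into one kernel-verified Lean document; each statement's English description precedes it below -/
import Mathlib

section
/- Suppose the blocks of 𝐀, 𝐁, 𝐂, 𝐃 satisfy: A_{i+1,j+1} = −B_{i+1,j} = C_{i,j+1} = −D_{i,j} for all i ≠ j (block indices mod n), and A_{j+1,j+1} − D_{j,j} + B_{j+1,j} − C_{j,j+1} = 0 for all j. Then R_j := A_{j+1,j+1} + B_{j+1,j} = D_{j,j} + C_{j,j+1} for all j, and for every C^∞ Ad-invariant function φ : g → ℝ, setting Φ(𝐮) = φ(u_n⬝⋯⬝u_1), the Hamiltonian equations take the local Lax triad form: for every j, all matrix positions a, b and all 𝐮 ∈ 𝐠, {Φ, e_{j,a,b}}(𝐮) = (u_j⬝𝓛_{j−1} − 𝓛_j⬝u_j)_{ab}, where e_{j,a,b}(𝐮) = (u_j)_{ab}, 𝓛_j = R_j(dφ(T_j)), T_j = u_j⬝⋯⬝u_1⬝u_n⬝⋯⬝u_{j+1}, and all subscripts are taken mod n (T_0 = T_n). -/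
open Matrix

attribute [local instance] Matrix.normedAddCommGroup Matrix.normedSpace

/-- The trace form `⟨X,Y⟩ = trace (X⬝Y)` on `g = Matrix (Fin N) (Fin N) ℝ`. -/
noncomputable def tf {N : ℕ} (X Y : Matrix (Fin N) (Fin N) ℝ) : ℝ := (X * Y).trace

/-- The gradient of a function `φ : g → ℝ` with respect to the trace form:
it satisfies `⟨∇φ(u), X⟩ = (fderiv ℝ φ u) X` for all `X`. -/
noncomputable def grad {N : ℕ} (φ : Matrix (Fin N) (Fin N) ℝ → ℝ)
    (u : Matrix (Fin N) (Fin N) ℝ) : Matrix (Fin N) (Fin N) ℝ :=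
  Matrix.of fun i j => fderiv ℝ φ u (Matrix.single j i 1)

/-- `dφ(u) = u ⬝ ∇φ(u)` -/
noncomputable def dr {N : ℕ} (φ : Matrix (Fin N) (Fin N) ℝ → ℝ)
    (u : Matrix (Fin N) (Fin N) ℝ) : Matrix (Fin N) (Fin N) ℝ := u * grad φ u

/-- `d'φ(u) = ∇φ(u) ⬝ u` -/
noncomputable def dl {N : ℕ} (φ : Matrix (Fin N) (Fin N) ℝ → ℝ)
    (u : Matrix (Fin N) (Fin N) ℝ) : Matrix (Fin N) (Fin N) ℝ := grad φ u * u

/-- The `j`-th partial gradient `∇_jΦ(𝐮)` of a function `Φ : 𝐠 → ℝ` on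
`𝐠 = Fin n → g`: it satisfies `⟨∇_jΦ(𝐮),X⟩ = DΦ(𝐮)(X placed in the j-th slot)`. -/
noncomputable def bigGrad {N n : ℕ} (Φ : (Fin n → Matrix (Fin N) (Fin N) ℝ) → ℝ)
    (u : Fin n → Matrix (Fin N) (Fin N) ℝ) (j : Fin n) : Matrix (Fin N) (Fin N) ℝ :=
  Matrix.of fun a b => fderiv ℝ Φ u (Pi.single j (Matrix.single b a 1))

/-- `d_jΦ(𝐮) = u_j ⬝ ∇_jΦ(𝐮)` -/
noncomputable def ddj {N n : ℕ} (Φ : (Fin n → Matrix (Fin N) (Fin N) ℝ) → ℝ)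
    (u : Fin n → Matrix (Fin N) (Fin N) ℝ) (j : Fin n) : Matrix (Fin N) (Fin N) ℝ :=
  u j * bigGrad Φ u j

/-- `d'_jΦ(𝐮) = ∇_jΦ(𝐮) ⬝ u_j` -/
noncomputable def ddj' {N n : ℕ} (Φ : (Fin n → Matrix (Fin N) (Fin N) ℝ) → ℝ)
    (u : Fin n → Matrix (Fin N) (Fin N) ℝ) (j : Fin n) : Matrix (Fin N) (Fin N) ℝ :=
  bigGrad Φ u j * u j

/-- The monodromy `𝓜(𝐮) = u_n ⬝ ⋯ ⬝ u_1` (in 1-based notation `u i = u_{i+1}`). -/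
noncomputable def monod {N n : ℕ} (u : Fin n → Matrix (Fin N) (Fin N) ℝ) :
    Matrix (Fin N) (Fin N) ℝ :=
  (List.ofFn u).reverse.prod

/-- The decreasing partial product `u_j ⬝ ⋯ ⬝ u_1` (`j` 1-based, `0 ≤ j ≤ n`). -/
noncomputable def downProd {N n : ℕ} (u : Fin n → Matrix (Fin N) (Fin N) ℝ) (j : ℕ) :
    Matrix (Fin N) (Fin N) ℝ :=
  ((List.ofFn u).take j).reverse.prod

/-- The decreasing partial product `u_n ⬝ ⋯ ⬝ u_{j+1}` (`j` 1-based, `0 ≤ j ≤ n`). -/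
noncomputable def upProd {N n : ℕ} (u : Fin n → Matrix (Fin N) (Fin N) ℝ) (j : ℕ) :
    Matrix (Fin N) (Fin N) ℝ :=
  ((List.ofFn u).drop j).reverse.prod

/-- `T_j = u_j ⬝ ⋯ ⬝ u_1 ⬝ u_n ⬝ ⋯ ⬝ u_{j+1}` (`j` 1-based; `T_0 = T_n = 𝓜(𝐮)`). -/
noncomputable def tmat {N n : ℕ} (u : Fin n → Matrix (Fin N) (Fin N) ℝ) (j : ℕ) :
    Matrix (Fin N) (Fin N) ℝ :=
  downProd u j * upProd u j

/-- The quadratic bracket PB(A,B,C,D) on `g`. -/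
noncomputable def pb {N : ℕ}
    (A B C D : Matrix (Fin N) (Fin N) ℝ →ₗ[ℝ] Matrix (Fin N) (Fin N) ℝ)
    (φ ψ : Matrix (Fin N) (Fin N) ℝ → ℝ) (u : Matrix (Fin N) (Fin N) ℝ) : ℝ :=
  tf (A (dl φ u)) (dl ψ u) - tf (D (dr φ u)) (dr ψ u)
    + tf (B (dr φ u)) (dl ψ u) - tf (C (dl φ u)) (dr ψ u)

/-- The quadratic bracket PB(𝐀,𝐁,𝐂,𝐃) on `𝐠 = Fin n → g`, for operators
encoded by blocks `A i j`, `B i j`, `C i j`, `D i j`. -/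
noncomputable def bigPB {N n : ℕ}
    (A B C D : Fin n → Fin n → (Matrix (Fin N) (Fin N) ℝ →ₗ[ℝ] Matrix (Fin N) (Fin N) ℝ))
    (Φ Ψ : (Fin n → Matrix (Fin N) (Fin N) ℝ) → ℝ)
    (u : Fin n → Matrix (Fin N) (Fin N) ℝ) : ℝ :=
  ∑ i, ∑ j,
    (tf (A i j (ddj' Φ u j)) (ddj' Ψ u i) - tf (D i j (ddj Φ u j)) (ddj Ψ u i)
      + tf (B i j (ddj Φ u j)) (ddj' Ψ u i) - tf (C i j (ddj' Φ u j)) (ddj Ψ u i))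

/-- Ad-invariance of `φ : g → ℝ`: `φ (v ⬝ u ⬝ v⁻¹) = φ u` for every invertible `v`. -/
def AdInvariant {N : ℕ} (φ : Matrix (Fin N) (Fin N) ℝ → ℝ) : Prop :=
  ∀ (u v : Matrix (Fin N) (Fin N) ℝ), IsUnit v → φ (v * u * v⁻¹) = φ u

/-- The cyclic successor on `Fin n` (index shift mod n). -/
def finSucc {n : ℕ} (hn : 1 ≤ n) (j : Fin n) : Fin n :=
  ⟨(j.val + 1) % n, Nat.mod_lt _ hn⟩

/-- The cyclic predecessor on `Fin n` (index shift mod n). -/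
def finPred {n : ℕ} (hn : 1 ≤ n) (j : Fin n) : Fin n :=
  ⟨(j.val + (n - 1)) % n, Nat.mod_lt _ hn⟩

section Lemmas
variable {N : ℕ}

lemma trace_mul_std (M : Matrix (Fin N) (Fin N) ℝ) (a b : Fin N) :
    (M * Matrix.single b a 1).trace = M a b := by
  classical
  simp only [Matrix.trace, Matrix.diag, Matrix.mul_apply, Matrix.single, Matrix.of_apply,
    mul_ite, mul_one, mul_zero]
  rw [Finset.sum_comm]
  simp [ite_and, Finset.sum_ite_eq]

lemma tf_grad (φ : Matrix (Fin N) (Fin N) ℝ → ℝ) (u X : Matrix (Fin N) (Fin N) ℝ) :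
    tf (grad φ u) X = fderiv ℝ φ u X := by
  classical
  have hX : X = ∑ i : Fin N, ∑ j : Fin N, Matrix.single i j (X i j) :=
    Matrix.matrix_eq_sum_single X
  calc tf (grad φ u) X = ∑ i : Fin N, ∑ j : Fin N, grad φ u j i * X i j := by
        simp [tf, Matrix.trace, Matrix.diag, Matrix.mul_apply]
        rw [Finset.sum_comm]
    _ = ∑ i : Fin N, ∑ j : Fin N, X i j * fderiv ℝ φ u (Matrix.single i j 1) := by
        simp [grad, Matrix.of_apply, mul_comm]
    _ = fderiv ℝ φ u X := by
        conv_rhs => rw [hX]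
        rw [map_sum]
        refine Finset.sum_congr rfl fun i _ => ?_
        rw [map_sum]
        refine Finset.sum_congr rfl fun j _ => ?_
        have : Matrix.single i j (X i j) = (X i j) • Matrix.single i j 1 := by
          rw [Matrix.smul_single, smul_eq_mul, mul_one]
        rw [this, (fderiv ℝ φ u).map_smul, smul_eq_mul]

lemma matrix_ext_of_trace (Y Z : Matrix (Fin N) (Fin N) ℝ)
    (h : ∀ X, (Y * X).trace = (Z * X).trace) : Y = Z := by
  ext a b
  have := h (Matrix.single b a 1)
  rwa [trace_mul_std, trace_mul_std] at this

end Lemmas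
section AdInv
variable {N : ℕ}

lemma grad_continuous {φ : Matrix (Fin N) (Fin N) ℝ → ℝ} (hφ : ContDiff ℝ (⊤ : ℕ∞) φ) :
    Continuous (grad φ) := by
  apply continuous_matrix
  intro i j
  have h1 : Continuous (fun u => fderiv ℝ φ u) := hφ.continuous_fderiv (by simp)
  exact (ContinuousLinearMap.apply ℝ ℝ (Matrix.single j i (1:ℝ))).continuous.comp h1

lemma units_dense :
    Dense {Q : Matrix (Fin N) (Fin N) ℝ | IsUnit Q} := by
  intro Q
  set S : Set ℝ := (fun x => -x) '' (spectrum ℝ Q) with hS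
  have hfin : S.Finite := (Matrix.finite_spectrum Q).image _
  have hdense : Dense Sᶜ := hfin.countable.dense_compl ℝ
  have h0 : (0:ℝ) ∈ closure Sᶜ := hdense 0
  have hne : (nhdsWithin (0:ℝ) Sᶜ).NeBot := mem_closure_iff_nhdsWithin_neBot.mp h0
  have htend : Filter.Tendsto (fun t : ℝ => Q + t • (1 : Matrix (Fin N) (Fin N) ℝ))
      (nhdsWithin (0:ℝ) Sᶜ) (nhds Q) := by
    have : Filter.Tendsto (fun t : ℝ => Q + t • (1 : Matrix (Fin N) (Fin N) ℝ))
        (nhds 0) (nhds Q) := by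
      have hc : Continuous (fun t : ℝ => Q + t • (1 : Matrix (Fin N) (Fin N) ℝ)) :=
        continuous_const.add (continuous_id.smul continuous_const)
      simpa using hc.tendsto 0
    exact this.mono_left nhdsWithin_le_nhds
  refine mem_closure_of_tendsto htend ?_
  filter_upwards [self_mem_nhdsWithin] with t ht
  have : -t ∉ spectrum ℝ Q := by
    intro hmem
    exact ht ⟨-t, hmem, by simp⟩
  have hu : IsUnit ((algebraMap ℝ (Matrix (Fin N) (Fin N) ℝ)) (-t) - Q) :=
    spectrum.notMem_iff.mp this
  rw [Algebra.algebraMap_eq_smul_one] at hu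
  have : Q + t • (1 : Matrix (Fin N) (Fin N) ℝ) = -((-t) • 1 - Q) := by
    rw [neg_smul]; abel
  rw [this]
  exact hu.neg

end AdInv
section Conj
variable {N : ℕ} {φ : Matrix (Fin N) (Fin N) ℝ → ℝ}

lemma fderiv_conj (hd : Differentiable ℝ φ) (hAd : AdInvariant φ)
    {v : Matrix (Fin N) (Fin N) ℝ} (hv : IsUnit v) (u X : Matrix (Fin N) (Fin N) ℝ) :
    fderiv ℝ φ u X = fderiv ℝ φ (v * u * v⁻¹) (v * X * v⁻¹) := by
  classical
  set L : Matrix (Fin N) (Fin N) ℝ →ₗ[ℝ] Matrix (Fin N) (Fin N) ℝ :=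
    (LinearMap.mulLeft ℝ v).comp (LinearMap.mulRight ℝ v⁻¹) with hL
  let Lc := LinearMap.toContinuousLinearMap L
  have hLc : ∀ x, Lc x = v * x * v⁻¹ := by
    intro x
    simp [Lc, hL, LinearMap.mulLeft_apply, LinearMap.mulRight_apply, mul_assoc]
  have hcomp : φ ∘ Lc = φ := by
    funext x
    simp only [Function.comp_apply, hLc]
    exact hAd x v hv
  have h1 : HasFDerivAt (φ ∘ Lc) ((fderiv ℝ φ (Lc u)).comp (Lc : _ →L[ℝ] _)) u :=
    (hd (Lc u)).hasFDerivAt.comp u Lc.hasFDerivAt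
  have h2 : fderiv ℝ φ u = (fderiv ℝ φ (Lc u)).comp (Lc : _ →L[ℝ] _) := by
    have h3 := h1.fderiv
    rwa [hcomp] at h3
  rw [h2]
  simp [ContinuousLinearMap.comp_apply, hLc]

lemma grad_conj (hφ : ContDiff ℝ (⊤ : ℕ∞) φ) (hAd : AdInvariant φ)
    {v : Matrix (Fin N) (Fin N) ℝ} (hv : IsUnit v) (u : Matrix (Fin N) (Fin N) ℝ) :
    grad φ (v * u * v⁻¹) = v * grad φ u * v⁻¹ := by
  have hdet : IsUnit v.det := (Matrix.isUnit_iff_isUnit_det v).mp hv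
  have hv1 : v * v⁻¹ = 1 := Matrix.mul_nonsing_inv v hdet
  have hv2 : v⁻¹ * v = 1 := Matrix.nonsing_inv_mul v hdet
  apply matrix_ext_of_trace
  intro X
  have e1 : (grad φ (v * u * v⁻¹) * X).trace = fderiv ℝ φ (v * u * v⁻¹) X := tf_grad φ _ X
  have e2 : (v * grad φ u * v⁻¹ * X).trace = fderiv ℝ φ u (v⁻¹ * X * v) := by
    rw [← tf_grad φ u (v⁻¹ * X * v)]
    show _ = (grad φ u * (v⁻¹ * X * v)).trace
    rw [show v * grad φ u * v⁻¹ * X = v * (grad φ u * (v⁻¹ * X)) by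
        simp [mul_assoc], Matrix.trace_mul_comm]
    simp [mul_assoc]
  rw [e1, e2, fderiv_conj (hφ.differentiable (by simp)) hAd hv u (v⁻¹ * X * v)]
  congr 1
  rw [show v * (v⁻¹ * X * v) * v⁻¹ = (v * v⁻¹) * X * (v * v⁻¹) by simp [mul_assoc], hv1]
  simp

lemma grad_comm (hφ : ContDiff ℝ (⊤ : ℕ∞) φ) (hAd : AdInvariant φ)
    (u : Matrix (Fin N) (Fin N) ℝ) : u * grad φ u = grad φ u * u := by
  have hcont : Continuous (grad φ) := grad_continuous hφ
  have h : ∀ w : Matrix (Fin N) (Fin N) ℝ, IsUnit w → w * grad φ w = grad φ w * w := by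
    intro w hw
    have hdet : IsUnit w.det := (Matrix.isUnit_iff_isUnit_det w).mp hw
    have hv1 : w * w⁻¹ = 1 := Matrix.mul_nonsing_inv w hdet
    have hv2 : w⁻¹ * w = 1 := Matrix.nonsing_inv_mul w hdet
    have hthis := grad_conj hφ hAd hw w
    rw [mul_assoc, hv1, mul_one] at hthis
    calc w * grad φ w = w * grad φ w * (w⁻¹ * w) := by rw [hv2, mul_one]
      _ = (w * grad φ w * w⁻¹) * w := by simp [mul_assoc]
      _ = grad φ w * w := by rw [← hthis]
  have heq := Continuous.ext_on (units_dense (N := N))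
    (continuous_id.matrix_mul hcont) (hcont.matrix_mul continuous_id)
    (fun w hw => h w hw)
  exact congrFun heq u

end Conj
section Key
variable {N : ℕ} {φ : Matrix (Fin N) (Fin N) ℝ → ℝ}

lemma grad_swap (hφ : ContDiff ℝ (⊤ : ℕ∞) φ) (hAd : AdInvariant φ)
    (P Q : Matrix (Fin N) (Fin N) ℝ) :
    Q * grad φ (P * Q) * P = (Q * P) * grad φ (Q * P) := by
  have hcont : Continuous (grad φ) := grad_continuous hφ
  have h : ∀ Q : Matrix (Fin N) (Fin N) ℝ, IsUnit Q →
      Q * grad φ (P * Q) * P = (Q * P) * grad φ (Q * P) := by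
    intro Q hw
    have hdet : IsUnit Q.det := (Matrix.isUnit_iff_isUnit_det Q).mp hw
    have hv1 : Q * Q⁻¹ = 1 := Matrix.mul_nonsing_inv Q hdet
    have hv2 : Q⁻¹ * Q = 1 := Matrix.nonsing_inv_mul Q hdet
    have hwi : IsUnit Q⁻¹ := (Matrix.isUnit_iff_isUnit_det _).mpr (Matrix.isUnit_nonsing_inv_det Q hdet)
    have hinv : (Q⁻¹)⁻¹ = Q := Matrix.nonsing_inv_nonsing_inv Q hdet
    have hc := grad_conj hφ hAd hwi (Q * P)
    rw [hinv] at hc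
    have harg : Q⁻¹ * (Q * P) * Q = P * Q := by
      rw [← mul_assoc, hv2, one_mul]
    rw [harg] at hc
    rw [hc]
    calc Q * (Q⁻¹ * grad φ (Q * P) * Q) * P
        = (Q * Q⁻¹) * grad φ (Q * P) * (Q * P) := by simp [mul_assoc]
      _ = grad φ (Q * P) * (Q * P) := by rw [hv1, one_mul]
      _ = (Q * P) * grad φ (Q * P) := (grad_comm hφ hAd _).symm
  have hf : Continuous (fun Q : Matrix (Fin N) (Fin N) ℝ =>
      Q * grad φ (P * Q) * P) := by
    have : Continuous (fun Q : Matrix (Fin N) (Fin N) ℝ => grad φ (P * Q)) :=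
      hcont.comp (continuous_const.matrix_mul continuous_id)
    exact (continuous_id.matrix_mul this).matrix_mul continuous_const
  have hg : Continuous (fun Q : Matrix (Fin N) (Fin N) ℝ =>
      (Q * P) * grad φ (Q * P)) := by
    have h1 : Continuous (fun Q : Matrix (Fin N) (Fin N) ℝ => Q * P) :=
      continuous_id.matrix_mul continuous_const
    exact h1.matrix_mul (hcont.comp h1)
  exact congrFun (Continuous.ext_on (units_dense (N := N)) hf hg (fun w hw => h w hw)) Q

end Key
section Prods
variable {N n : ℕ}

lemma downProd_zero (u : Fin n → Matrix (Fin N) (Fin N) ℝ) : downProd u 0 = 1 := by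
  simp [downProd]

lemma downProd_ge (u : Fin n → Matrix (Fin N) (Fin N) ℝ) {j : ℕ} (h : n ≤ j) :
    downProd u j = monod u := by
  rw [downProd, monod, List.take_of_length_le (by simpa using h : (List.ofFn u).length ≤ j)]

lemma upProd_ge (u : Fin n → Matrix (Fin N) (Fin N) ℝ) {j : ℕ} (h : n ≤ j) :
    upProd u j = 1 := by
  rw [upProd, List.drop_of_length_le (by simpa using h : (List.ofFn u).length ≤ j)]
  simp

lemma upProd_zero (u : Fin n → Matrix (Fin N) (Fin N) ℝ) : upProd u 0 = monod u := by
  simp [upProd, monod]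

lemma downProd_succ (u : Fin n → Matrix (Fin N) (Fin N) ℝ) {j : ℕ} (h : j < n) :
    downProd u (j + 1) = u ⟨j, h⟩ * downProd u j := by
  have hlen : j < (List.ofFn u).length := by simpa using h
  rw [downProd, downProd, List.take_succ, List.getElem?_eq_getElem hlen]
  simp [List.getElem_ofFn]

lemma upProd_succ (u : Fin n → Matrix (Fin N) (Fin N) ℝ) {j : ℕ} (h : j < n) :
    upProd u j = upProd u (j + 1) * u ⟨j, h⟩ := by
  have hlen : j < (List.ofFn u).length := by simpa using h
  rw [upProd, upProd, List.drop_eq_getElem_cons hlen]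
  simp [List.getElem_ofFn]

lemma monod_eq_up_down (u : Fin n → Matrix (Fin N) (Fin N) ℝ) (j : ℕ) :
    monod u = upProd u j * downProd u j := by
  rw [monod, upProd, downProd, ← List.prod_append, ← List.reverse_append,
    List.take_append_drop]

lemma tmat_n_eq_zero (u : Fin n → Matrix (Fin N) (Fin N) ℝ) :
    tmat u n = tmat u 0 := by
  rw [tmat, tmat, downProd_zero, downProd_ge u le_rfl, upProd_ge u le_rfl, upProd_zero]
  simp

lemma downProd_update (u : Fin n → Matrix (Fin N) (Fin N) ℝ) (k : Fin n)
    (v : Matrix (Fin N) (Fin N) ℝ) {j : ℕ} (h : j ≤ k.val) :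
    downProd (Function.update u k v) j = downProd u j := by
  unfold downProd
  congr 1
  congr 1
  apply List.ext_getElem
  · simp
  · intro i h1 h2
    simp only [List.getElem_take, List.getElem_ofFn]
    rw [Function.update_apply]
    rw [if_neg]
    intro hik
    have hij : i < j := by
      simp only [List.length_take, List.length_ofFn] at h1
      omega
    have := congrArg Fin.val hik
    simp at this
    omega

lemma upProd_update (u : Fin n → Matrix (Fin N) (Fin N) ℝ) (k : Fin n)
    (v : Matrix (Fin N) (Fin N) ℝ) {j : ℕ} (h : k.val < j) :
    upProd (Function.update u k v) j = upProd u j := by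
  unfold upProd
  congr 1
  congr 1
  apply List.ext_getElem
  · simp
  · intro i h1 h2
    simp only [List.getElem_drop, List.getElem_ofFn]
    rw [Function.update_apply, if_neg]
    intro hik
    have := congrArg Fin.val hik
    simp at this
    omega

end Prods
section Diff
variable {N n : ℕ}

lemma differentiable_entry {E : Type*} [NormedAddCommGroup E] [NormedSpace ℝ E]
    {f : E → Matrix (Fin N) (Fin N) ℝ} (hf : Differentiable ℝ f) (i j : Fin N) :
    Differentiable ℝ (fun x => f x i j) := by
  have h1 : Differentiable ℝ (fun x => f x i) := by
    exact (differentiable_pi.mp hf) i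
  exact (differentiable_pi.mp h1) j

lemma Differentiable.mmul {E : Type*} [NormedAddCommGroup E] [NormedSpace ℝ E]
    {f g : E → Matrix (Fin N) (Fin N) ℝ} (hf : Differentiable ℝ f)
    (hg : Differentiable ℝ g) : Differentiable ℝ (fun x => f x * g x) := by
  apply differentiable_pi.mpr
  intro i
  apply differentiable_pi.mpr
  intro j
  have : (fun x => (f x * g x) i j) = fun x => ∑ k, f x i k * g x k j := by
    funext x; simp [Matrix.mul_apply]
  show Differentiable ℝ fun x => (f x * g x) i j
  rw [this]
  exact Differentiable.fun_sum fun k _ =>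
    (differentiable_entry hf i k).mul (differentiable_entry hg k j)

lemma downProd_diff (j : ℕ) :
    Differentiable ℝ (fun u : Fin n → Matrix (Fin N) (Fin N) ℝ => downProd u j) := by
  induction j with
  | zero => simpa [downProd_zero] using differentiable_const _
  | succ j ih =>
    by_cases h : j < n
    · have : (fun u : Fin n → Matrix (Fin N) (Fin N) ℝ => downProd u (j+1))
          = fun u => u ⟨j, h⟩ * downProd u j := by
        funext u; exact downProd_succ u h
      rw [this]
      exact ((differentiable_pi.mp (differentiable_id (𝕜 := ℝ) (E := Fin n → Matrix (Fin N) (Fin N) ℝ))) ⟨j, h⟩).mmul ih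
    · have hn : n ≤ j := by omega
      have : (fun u : Fin n → Matrix (Fin N) (Fin N) ℝ => downProd u (j+1))
          = fun u => downProd u j := by
        funext u; rw [downProd_ge u (by omega), downProd_ge u hn]
      rw [this]; exact ih

lemma monod_diff : Differentiable ℝ (fun u : Fin n → Matrix (Fin N) (Fin N) ℝ => monod u) := by
  have : (fun u : Fin n → Matrix (Fin N) (Fin N) ℝ => monod u)
      = fun u => downProd u n := by funext u; rw [downProd_ge u le_rfl]
  rw [this]; exact downProd_diff n

end Diff
section BigGradComp
variable {N n : ℕ} {φ : Matrix (Fin N) (Fin N) ℝ → ℝ}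

lemma monod_update (u : Fin n → Matrix (Fin N) (Fin N) ℝ) (j : Fin n)
    (v : Matrix (Fin N) (Fin N) ℝ) :
    monod (Function.update u j v) = upProd u (j.val + 1) * v * downProd u j.val := by
  have hj : j.val < n := j.isLt
  rw [monod_eq_up_down (Function.update u j v) (j.val + 1),
    downProd_succ (Function.update u j v) hj,
    upProd_update u j v (by omega), downProd_update u j v le_rfl]
  have : Function.update u j v ⟨j.val, hj⟩ = v := by
    rw [Fin.eta]; simp
  rw [this, mul_assoc]

lemma monod_factor (u : Fin n → Matrix (Fin N) (Fin N) ℝ) (j : Fin n) :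
    monod u = upProd u (j.val + 1) * u j * downProd u j.val := by
  have := monod_update u j (u j)
  rwa [Function.update_eq_self] at this

lemma bigGrad_comp (hφ : ContDiff ℝ (⊤ : ℕ∞) φ) (u : Fin n → Matrix (Fin N) (Fin N) ℝ)
    (j : Fin n) :
    bigGrad (fun w => φ (monod w)) u j
      = downProd u j.val * grad φ (monod u) * upProd u (j.val + 1) := by
  classical
  set P := upProd u (j.val + 1) with hP
  set Q := downProd u j.val with hQ
  set G := grad φ (monod u) with hG
  ext a b
  show fderiv ℝ (fun w => φ (monod w)) u (Pi.single j (Matrix.single b a 1))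
      = (Q * G * P) a b
  set X : Matrix (Fin N) (Fin N) ℝ := Matrix.single b a 1 with hX
  set V : Fin n → Matrix (Fin N) (Fin N) ℝ := Pi.single j X with hV
  have hupdate : ∀ t : ℝ, u + t • V = Function.update u j (u j + t • X) := by
    intro t
    funext i
    by_cases hij : i = j
    · subst hij; simp [hV]
    · simp [hV, Function.update_apply, hij, Pi.single_apply]
  have hline : ∀ t : ℝ, φ (monod (u + t • V)) = φ (monod u + t • (P * X * Q)) := by
    intro t
    rw [hupdate t, monod_update u j (u j + t • X)]
    congr 1
    rw [monod_factor u j]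
    rw [mul_add, add_mul, Matrix.mul_smul, Matrix.smul_mul]
  have hφd := hφ.differentiable (by simp)
  have hΦd : DifferentiableAt ℝ (fun w => φ (monod w)) u :=
    (hφd (monod u)).comp u (monod_diff u)
  have hg : HasDerivAt (fun t : ℝ => u + t • V) V 0 := by
    have := ((hasDerivAt_id (0:ℝ)).smul_const V).const_add u
    simp only [one_smul, id_eq] at this; exact this
  have h1 : HasDerivAt (fun t : ℝ => φ (monod (u + t • V)))
      (fderiv ℝ (fun w => φ (monod w)) u V) 0 := by
    have hpt : HasFDerivAt (fun w => φ (monod w)) (fderiv ℝ (fun w => φ (monod w)) u)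
        (u + (0:ℝ) • V) := by simpa using hΦd.hasFDerivAt
    have := hpt.comp_hasDerivAt 0 hg
    exact this
  have hg2 : HasDerivAt (fun t : ℝ => monod u + t • (P * X * Q)) (P * X * Q) 0 := by
    have := ((hasDerivAt_id (0:ℝ)).smul_const (P * X * Q)).const_add (monod u)
    simp only [one_smul, id_eq] at this; exact this
  have h2 : HasDerivAt (fun t : ℝ => φ (monod u + t • (P * X * Q)))
      (fderiv ℝ φ (monod u) (P * X * Q)) 0 := by
    have hpt : HasFDerivAt φ (fderiv ℝ φ (monod u)) (monod u + (0:ℝ) • (P * X * Q)) := by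
      rw [zero_smul, add_zero]; exact (hφd (monod u)).hasFDerivAt
    have := hpt.comp_hasDerivAt 0 hg2
    exact this
  have hfun : (fun t : ℝ => φ (monod (u + t • V)))
      = fun t : ℝ => φ (monod u + t • (P * X * Q)) := funext hline
  rw [hfun] at h1
  have hder : fderiv ℝ (fun w => φ (monod w)) u V = fderiv ℝ φ (monod u) (P * X * Q) :=
    h1.unique h2
  rw [hder, ← tf_grad φ (monod u) (P * X * Q)]
  show (G * (P * X * Q)).trace = _
  rw [show G * (P * X * Q) = (G * P * X) * Q by simp [mul_assoc], Matrix.trace_mul_comm,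
    show Q * (G * P * X) = (Q * G * P) * X by simp [mul_assoc], hX, trace_mul_std]

end BigGradComp
section DdjComp
variable {N n : ℕ} {φ : Matrix (Fin N) (Fin N) ℝ → ℝ}

lemma ddj_comp (hφ : ContDiff ℝ (⊤ : ℕ∞) φ) (hAd : AdInvariant φ)
    (u : Fin n → Matrix (Fin N) (Fin N) ℝ) (j : Fin n) :
    ddj (fun w => φ (monod w)) u j = dr φ (tmat u (j.val + 1)) := by
  have hj : j.val < n := j.isLt
  rw [ddj, bigGrad_comp hφ u j]
  have h1 : u j * (downProd u j.val * grad φ (monod u) * upProd u (j.val + 1))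
      = downProd u (j.val + 1) * grad φ (monod u) * upProd u (j.val + 1) := by
    rw [downProd_succ u hj, Fin.eta]
    simp [mul_assoc]
  rw [h1, monod_eq_up_down u (j.val + 1)]
  rw [grad_swap hφ hAd (upProd u (j.val + 1)) (downProd u (j.val + 1))]
  rw [dr, tmat]

lemma ddj'_comp (hφ : ContDiff ℝ (⊤ : ℕ∞) φ) (hAd : AdInvariant φ)
    (u : Fin n → Matrix (Fin N) (Fin N) ℝ) (j : Fin n) :
    ddj' (fun w => φ (monod w)) u j = dr φ (tmat u j.val) := by
  have hj : j.val < n := j.isLt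
  rw [ddj', bigGrad_comp hφ u j]
  have h1 : downProd u j.val * grad φ (monod u) * upProd u (j.val + 1) * u j
      = downProd u j.val * grad φ (monod u) * upProd u j.val := by
    rw [upProd_succ u hj, Fin.eta]
    simp [mul_assoc]
  rw [h1, monod_eq_up_down u j.val]
  rw [grad_swap hφ hAd (upProd u j.val) (downProd u j.val)]
  rw [dr, tmat]

end DdjComp
section Eval
variable {N n : ℕ}

noncomputable def evalCLM (j : Fin n) (a b : Fin N) :
    (Fin n → Matrix (Fin N) (Fin N) ℝ) →L[ℝ] ℝ :=
  LinearMap.toContinuousLinearMap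
    { toFun := fun w => w j a b
      map_add' := by intros; simp
      map_smul' := by intros; simp }

lemma bigGrad_eval (j : Fin n) (a b : Fin N) (u : Fin n → Matrix (Fin N) (Fin N) ℝ)
    (i : Fin n) :
    bigGrad (fun w => (w j) a b) u i
      = if i = j then Matrix.single b a 1 else 0 := by
  classical
  have hfd : fderiv ℝ (fun w : Fin n → Matrix (Fin N) (Fin N) ℝ => (w j) a b) u
      = evalCLM j a b := (evalCLM j a b).hasFDerivAt.fderiv
  ext a' b'
  show fderiv ℝ (fun w : Fin n → Matrix (Fin N) (Fin N) ℝ => (w j) a b) u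
      (Pi.single i (Matrix.single b' a' 1)) = _
  rw [hfd]
  show (Pi.single i (Matrix.single b' a' (1:ℝ)) : Fin n → Matrix (Fin N) (Fin N) ℝ) j a b = _
  by_cases hij : i = j
  · subst hij
    simp only [Pi.single_eq_same, if_pos rfl]
    by_cases h1 : b' = a <;> by_cases h2 : a' = b <;>
      simp [h1, h2, Matrix.single] <;> simp_all [eq_comm]
  · rw [Pi.single_eq_of_ne (Ne.symm hij), if_neg hij]
    simp

end Eval
section FinLems
variable {n : ℕ} (hn : 1 ≤ n)

lemma finPred_finSucc (j : Fin n) : finPred hn (finSucc hn j) = j := by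
  have hj : j.val < n := j.isLt
  apply Fin.ext
  simp only [finPred, finSucc]
  rcases Nat.lt_or_ge (j.val + 1) n with h | h
  · rw [Nat.mod_eq_of_lt h]
    have : j.val + 1 + (n - 1) = j.val + n := by omega
    rw [this, Nat.add_mod_right, Nat.mod_eq_of_lt hj]
  · have h1 : j.val + 1 = n := by omega
    rw [h1, Nat.mod_self, Nat.zero_add, Nat.mod_eq_of_lt (by omega)]
    omega

lemma finSucc_finPred (j : Fin n) : finSucc hn (finPred hn j) = j := by
  have hj : j.val < n := j.isLt
  apply Fin.ext
  simp only [finPred, finSucc]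
  rcases Nat.eq_zero_or_pos j.val with h | h
  · have e1 : (j.val + (n - 1)) % n = n - 1 := by
      rw [h, Nat.zero_add]; exact Nat.mod_eq_of_lt (by omega)
    rw [e1, show n - 1 + 1 = n by omega, Nat.mod_self]
    omega
  · have h1 : j.val + (n - 1) = n + (j.val - 1) := by omega
    have e1 : (j.val + (n - 1)) % n = j.val - 1 := by
      rw [h1, Nat.add_mod_left]; exact Nat.mod_eq_of_lt (by omega)
    rw [e1, show j.val - 1 + 1 = j.val by omega]
    exact Nat.mod_eq_of_lt hj

lemma finSucc_bij : Function.Bijective (finSucc hn) :=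
  Function.bijective_iff_has_inverse.mpr
    ⟨finPred hn, finPred_finSucc hn, finSucc_finPred hn⟩

lemma tmat_succ_val {N : ℕ} (u : Fin n → Matrix (Fin N) (Fin N) ℝ) (j : Fin n) :
    tmat u (j.val + 1) = tmat u ((finSucc hn j).val) := by
  rcases Nat.lt_or_ge (j.val + 1) n with h | h
  · have : (finSucc hn j).val = j.val + 1 := by
      simp [finSucc, Nat.mod_eq_of_lt h]
    rw [this]
  · have h1 : j.val + 1 = n := by have := j.isLt; omega
    have : (finSucc hn j).val = 0 := by simp [finSucc, h1]
    rw [this, h1, tmat_n_eq_zero]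

end FinLems
section TfLems
variable {N : ℕ}

lemma tf_zero_right (M : Matrix (Fin N) (Fin N) ℝ) : tf M 0 = 0 := by simp [tf]

lemma tf_std_mul (M w : Matrix (Fin N) (Fin N) ℝ) (a b : Fin N) :
    tf M (Matrix.single b a 1 * w) = (w * M) a b := by
  show (M * (Matrix.single b a 1 * w)).trace = _
  rw [show M * (Matrix.single b a 1 * w) = (M * Matrix.single b a 1) * w by
    simp [mul_assoc], Matrix.trace_mul_comm,
    show w * (M * Matrix.single b a 1) = (w * M) * Matrix.single b a 1 by
    simp [mul_assoc], trace_mul_std]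

lemma tf_mul_std (M w : Matrix (Fin N) (Fin N) ℝ) (a b : Fin N) :
    tf M (w * Matrix.single b a 1) = (M * w) a b := by
  show (M * (w * Matrix.single b a 1)).trace = _
  rw [show M * (w * Matrix.single b a 1) = (M * w) * Matrix.single b a 1 by
    simp [mul_assoc], trace_mul_std]

end TfLems
theorem statement12 (N n : ℕ) (hN : 1 ≤ N) (hn : 1 ≤ n)
    (A B C D : Fin n → Fin n → (Matrix (Fin N) (Fin N) ℝ →ₗ[ℝ] Matrix (Fin N) (Fin N) ℝ))
    -- A_{i+1,j+1} = −B_{i+1,j} = C_{i,j+1} = −D_{i,j} for i ≠ j (indices mod n)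
    (h1 : ∀ i j : Fin n, i ≠ j →
      A (finSucc hn i) (finSucc hn j) = - B (finSucc hn i) j
        ∧ A (finSucc hn i) (finSucc hn j) = C i (finSucc hn j)
        ∧ A (finSucc hn i) (finSucc hn j) = - D i j)
    -- A_{j+1,j+1} − D_{j,j} + B_{j+1,j} − C_{j,j+1} = 0 for all j (indices mod n)
    (h2 : ∀ j : Fin n,
      A (finSucc hn j) (finSucc hn j) - D j j + B (finSucc hn j) j - C j (finSucc hn j) = 0) :
    -- R_j := A_{j+1,j+1} + B_{j+1,j} = D_{j,j} + C_{j,j+1}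
    (∀ j : Fin n, A (finSucc hn j) (finSucc hn j) + B (finSucc hn j) j
        = D j j + C j (finSucc hn j))
    -- the local Lax triad form of the Hamiltonian equations:
    -- {Φ, e_{j,a,b}}(𝐮) = (u_j ⬝ 𝓛_{j−1} − 𝓛_j ⬝ u_j)_{ab} with 𝓛_j = R_j(dφ(T_j))
    ∧ (∀ (φ : Matrix (Fin N) (Fin N) ℝ → ℝ), ContDiff ℝ (⊤ : ℕ∞) φ → AdInvariant φ →
        ∀ (j : Fin n) (a b : Fin N) (u : Fin n → Matrix (Fin N) (Fin N) ℝ),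
          bigPB A B C D (fun w => φ (monod w)) (fun w => (w j) a b) u
            = (u j *
                ((A (finSucc hn (finPred hn j)) (finSucc hn (finPred hn j))
                    + B (finSucc hn (finPred hn j)) (finPred hn j))
                  (dr φ (tmat u ((finPred hn j).val + 1))))
              - ((A (finSucc hn j) (finSucc hn j) + B (finSucc hn j) j)
                  (dr φ (tmat u (j.val + 1)))) * u j) a b) := by
  classical
  have part1 : ∀ j : Fin n, A (finSucc hn j) (finSucc hn j) + B (finSucc hn j) j
      = D j j + C j (finSucc hn j) := by
    intro j
    have h := h2 j
    have h' : (A (finSucc hn j) (finSucc hn j) + B (finSucc hn j) j)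
        - (D j j + C j (finSucc hn j)) = 0 := by rw [← h]; abel
    exact sub_eq_zero.mp h'
  refine ⟨part1, ?_⟩
  intro φ hφ hAd j a b u
  set LL : Fin n → Matrix (Fin N) (Fin N) ℝ := fun k => dr φ (tmat u k.val) with hLL
  set E : Matrix (Fin N) (Fin N) ℝ := Matrix.single b a 1 with hE
  have hΦj : ∀ j' : Fin n, ddj (fun w => φ (monod w)) u j' = LL (finSucc hn j') := by
    intro j'
    rw [ddj_comp hφ hAd u j', tmat_succ_val hn u j']
  have hΦj' : ∀ j' : Fin n, ddj' (fun w => φ (monod w)) u j' = LL j' :=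
    fun j' => ddj'_comp hφ hAd u j'
  have hΨ : ∀ i, ddj (fun w => (w j) a b) u i = if i = j then u j * E else 0 := by
    intro i
    rw [ddj, bigGrad_eval]
    by_cases hij : i = j
    · subst hij; simp [hE]
    · simp [hij]
  have hΨ' : ∀ i, ddj' (fun w => (w j) a b) u i = if i = j then E * u j else 0 := by
    intro i
    rw [ddj', bigGrad_eval]
    by_cases hij : i = j
    · subst hij; simp [hE]
    · simp [hij]
  rw [bigPB]
  have hcollapse := Finset.sum_eq_single_of_mem
    (f := fun i : Fin n => ∑ j' : Fin n,
      (tf (A i j' (ddj' (fun w => φ (monod w)) u j')) (ddj' (fun w => (w j) a b) u i)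
        - tf (D i j' (ddj (fun w => φ (monod w)) u j')) (ddj (fun w => (w j) a b) u i)
        + tf (B i j' (ddj (fun w => φ (monod w)) u j')) (ddj' (fun w => (w j) a b) u i)
        - tf (C i j' (ddj' (fun w => φ (monod w)) u j')) (ddj (fun w => (w j) a b) u i)))
    j (Finset.mem_univ j) (by
      intro i _ hij
      have z1 : ddj (fun w => (w j) a b) u i = 0 := by rw [hΨ i, if_neg hij]
      have z2 : ddj' (fun w => (w j) a b) u i = 0 := by rw [hΨ' i, if_neg hij]
      apply Finset.sum_eq_zero
      intro j' _
      rw [z1, z2, tf_zero_right, tf_zero_right, tf_zero_right, tf_zero_right]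
      ring)
  rw [hcollapse]
  beta_reduce
  · -- main sum over j'
    -- rewrite each summand
    have hterm : ∀ j' : Fin n,
        (tf (A j j' (ddj' (fun w => φ (monod w)) u j')) (ddj' (fun w => (w j) a b) u j)
          - tf (D j j' (ddj (fun w => φ (monod w)) u j')) (ddj (fun w => (w j) a b) u j)
          + tf (B j j' (ddj (fun w => φ (monod w)) u j')) (ddj' (fun w => (w j) a b) u j)
          - tf (C j j' (ddj' (fun w => φ (monod w)) u j')) (ddj (fun w => (w j) a b) u j))
        = (u j * (A j j' (LL j') + B j j' (LL (finSucc hn j')))) a b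
          - ((D j j' (LL (finSucc hn j')) + C j j' (LL j')) * u j) a b := by
      intro j'
      rw [hΦj j', hΦj' j', hΨ j, hΨ' j, if_pos rfl, if_pos rfl]
      rw [tf_std_mul, tf_std_mul, tf_mul_std, tf_mul_std]
      simp only [map_add, Matrix.mul_add, Matrix.add_mul, Matrix.add_apply]
      ring
    rw [Finset.sum_congr rfl (fun j' _ => hterm j'), Finset.sum_sub_distrib]
    have hsum1 : ∑ j' : Fin n, (u j * (A j j' (LL j') + B j j' (LL (finSucc hn j')))) a b
        = (u j * ∑ j' : Fin n, (A j j' (LL j') + B j j' (LL (finSucc hn j')))) a b := by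
      rw [Matrix.mul_sum, Matrix.sum_apply]
    have hsum2 : ∑ j' : Fin n, ((D j j' (LL (finSucc hn j')) + C j j' (LL j')) * u j) a b
        = ((∑ j' : Fin n, (D j j' (LL (finSucc hn j')) + C j j' (LL j'))) * u j) a b := by
      rw [Matrix.sum_mul, Matrix.sum_apply]
    rw [hsum1, hsum2]
    have sumI : ∑ j' : Fin n, (A j j' (LL j') + B j j' (LL (finSucc hn j')))
        = A j j (LL j) + B j (finPred hn j) (LL j) := by
      have reB : ∑ j' : Fin n, B j j' (LL (finSucc hn j'))
          = ∑ k : Fin n, B j (finPred hn k) (LL k) := by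
        apply Fintype.sum_bijective (finSucc hn) (finSucc_bij hn)
        intro j'
        rw [finPred_finSucc]
      rw [Finset.sum_add_distrib, reB, ← Finset.sum_add_distrib]
      refine Finset.sum_eq_single_of_mem j (Finset.mem_univ j) ?_
      intro k _ hkj
      have hne : finPred hn j ≠ finPred hn k := by
        intro h
        apply hkj
        rw [← finSucc_finPred hn k, ← h, finSucc_finPred hn j]
      have hab := (h1 (finPred hn j) (finPred hn k) hne).1
      rw [finSucc_finPred, finSucc_finPred] at hab
      rw [hab]
      simp
    have sumII : ∑ j' : Fin n, (D j j' (LL (finSucc hn j')) + C j j' (LL j'))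
        = D j j (LL (finSucc hn j)) + C j (finSucc hn j) (LL (finSucc hn j)) := by
      have reD : ∑ j' : Fin n, D j j' (LL (finSucc hn j'))
          = ∑ k : Fin n, D j (finPred hn k) (LL k) := by
        apply Fintype.sum_bijective (finSucc hn) (finSucc_bij hn)
        intro j'
        rw [finPred_finSucc]
      rw [Finset.sum_add_distrib, reD, ← Finset.sum_add_distrib]
      have hsing := Finset.sum_eq_single_of_mem
        (f := fun k : Fin n => D j (finPred hn k) (LL k) + C j k (LL k))
        (finSucc hn j) (Finset.mem_univ _) (by
          intro k _ hkj
          have hne : j ≠ finPred hn k := by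
            intro h
            apply hkj
            rw [h, finSucc_finPred]
          obtain ⟨e1, e2, e3⟩ := h1 j (finPred hn k) hne
          rw [finSucc_finPred] at e2 e3
          have hcd : C j k = - D j (finPred hn k) := by rw [← e2, e3]
          beta_reduce
          rw [hcd]
          simp)
      rw [hsing]
      beta_reduce
      rw [finPred_finSucc]
    rw [sumI, sumII]
    -- now handle RHS
    have hR1 : dr φ (tmat u ((finPred hn j).val + 1)) = LL j := by
      rw [tmat_succ_val hn u (finPred hn j), finSucc_finPred]
    have hR2 : dr φ (tmat u (j.val + 1)) = LL (finSucc hn j) := by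
      rw [tmat_succ_val hn u j]
    rw [hR1, hR2, finSucc_finPred hn j, part1 j]
    simp only [LinearMap.add_apply, Matrix.sub_apply]
end

section
/- Regard T(z,λ) as an M×M matrix with entries in the ring of Laurent polynomials ℝ[λ,λ⁻¹], and define P(z,λ) = Σ_{k=1}^{M} (z_k + z_{k−1} + ⋯ + z_{k−m+1}) E_{kk} + λ^m Σ_{k=1}^{M} E_{k+m,k} (indices mod M). Then every entry of the matrix T(z,λ)^m − P(z,λ) is a Laurent polynomial in λ all of whose coefficients at λ^p with p ≥ 0 vanish. In other words, P equals the sum of the nonnegative λ-degree parts of T^m, i.e. P = (P_+ + P_0)(T^m) in the grading by powers of λ. -/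
open Matrix LaurentPolynomial
open Fin.NatCast

/-- The periodic Bogoyavlensky Lax matrix
`T(z,λ) = λ^{1−m} Σ_k z_k E_{k,k+m−1} + λ Σ_k E_{k+1,k}` (indices mod M),
as an M×M matrix over the Laurent polynomial ring `ℝ[λ,λ⁻¹]`. -/
noncomputable def TmatL (m M : ℕ) [NeZero M] (z : Fin M → ℝ) :
    Matrix (Fin M) (Fin M) (LaurentPolynomial ℝ) :=
  (∑ k : Fin M, Matrix.single k (k + ((m - 1 : ℕ) : Fin M))
      (LaurentPolynomial.C (z k) * LaurentPolynomial.T (1 - (m : ℤ))))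
  + ∑ k : Fin M, Matrix.single (k + 1) k (LaurentPolynomial.T 1)

/-- `P(z,λ) = Σ_k (z_k + z_{k−1} + ⋯ + z_{k−m+1}) E_{kk} + λ^m Σ_k E_{k+m,k}`
(indices mod M), over `ℝ[λ,λ⁻¹]`. -/
noncomputable def PmatL (m M : ℕ) [NeZero M] (z : Fin M → ℝ) :
    Matrix (Fin M) (Fin M) (LaurentPolynomial ℝ) :=
  (∑ k : Fin M, Matrix.single k k
      (LaurentPolynomial.C (∑ l ∈ Finset.range m, z (k - (l : Fin M)))))
  + ∑ k : Fin M, Matrix.single (k + (m : Fin M)) k (LaurentPolynomial.T (m : ℤ))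

/-!
Split `T = A + B` with `A = λ^{1-m} Σ z_k E_{k,k+m-1}` of `λ`-degree `1 - m` and
`B = λ Σ E_{k+1,k}` of `λ`-degree `1`. In the expansion of `(A + B)^m`, the word `B^m` is the
`λ^m` part of `P`; each word `B^j A B^{m-1-j}` with exactly one `A` has degree `0` and, its shifts
`j - (m-1) + (m-1-j)` cancelling, is the diagonal matrix `diag(z_{k-j})`, so together they give
the diagonal part of `P`. Every word with at least two `A`s has degree at most
`2(1-m) + (m-2) = -m < 0`. This count holds in any `ℤ`-filtered ring: if `A ∈ F_a`, `B ∈ F_b` and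
`a ≤ b`, then `(A + B)^n - B^n - (part linear in A) ∈ F_{nb + 2(a-b)}`; here `F_d` consists of the
matrices whose entries contain no power of `λ` above `λ^d`.
-/

section Filtration

variable {S : Type*} [Ring S]

/-- The part of `(A + B) ^ n` linear in `A`: the derivative of `X ↦ X ^ n` at `B` along `A`. -/
def powLinearTerm (n : ℕ) (B A : S) : S :=
  ∑ j ∈ Finset.range n, B ^ j * A * B ^ (n - 1 - j)

lemma powLinearTerm_succ (n : ℕ) (B A : S) :
    powLinearTerm (n + 1) B A = B ^ n * A + powLinearTerm n B A * B := by
  rw [powLinearTerm, Finset.sum_range_succ, Nat.add_sub_cancel, Nat.sub_self, pow_zero, mul_one,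
    add_comm, powLinearTerm, Finset.sum_mul]
  congr 1
  refine Finset.sum_congr rfl fun j hj => ?_
  have hj : j < n := Finset.mem_range.mp hj
  rw [mul_assoc _ (B ^ _), ← pow_succ, Nat.sub_right_comm, Nat.sub_add_cancel (by omega)]

variable {F : ℤ → AddSubgroup S} [SetLike.GradedMonoid F]

lemma powLinearTerm_mem {A B : S} {a b : ℤ} (hA : A ∈ F a) (hB : B ∈ F b) (n : ℕ) :
    powLinearTerm n B A ∈ F ((n - 1) * b + a) := by
  refine sum_mem fun j hj => ?_
  have hj : j < n := Finset.mem_range.mp hj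
  convert SetLike.mul_mem_graded (SetLike.mul_mem_graded (SetLike.pow_mem_graded j hB) hA)
    (SetLike.pow_mem_graded (n - 1 - j) hB) using 2
  rw [nsmul_eq_mul, nsmul_eq_mul, Nat.cast_sub (by omega), Nat.cast_sub (by omega)]
  push_cast
  ring

theorem add_pow_sub_pow_sub_powLinearTerm_mem (hF : Monotone F) {A B : S} {a b : ℤ}
    (hab : a ≤ b) (hA : A ∈ F a) (hB : B ∈ F b) (n : ℕ) :
    (A + B) ^ n - B ^ n - powLinearTerm n B A ∈ F (n * b + 2 * (a - b)) := by
  induction n with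
  | zero => simp [powLinearTerm]
  | succ n ih =>
    have expand : (A + B) ^ (n + 1) - B ^ (n + 1) - powLinearTerm (n + 1) B A
        = powLinearTerm n B A * A + ((A + B) ^ n - B ^ n - powLinearTerm n B A) * (A + B) := by
      rw [pow_succ, pow_succ, powLinearTerm_succ]
      noncomm_ring
    rw [expand]
    refine add_mem ?_ ?_
    · convert SetLike.mul_mem_graded (powLinearTerm_mem hA hB n) hA using 2
      push_cast
      ring
    · convert SetLike.mul_mem_graded ih (add_mem (hF hab hA) hB) using 2
      push_cast
      ring

end Filtration

instance AddSubgroup.gradedMonoid_matrix {ι R n : Type*} [AddMonoid ι] [Ring R] [Fintype n]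
    [DecidableEq n] {F : ι → AddSubgroup R} [SetLike.GradedMonoid F] :
    SetLike.GradedMonoid fun i => (F i).matrix (m := n) (n := n) where
  one_mem i j := by
    rw [Matrix.one_apply]
    split_ifs
    · exact SetLike.one_mem_graded F
    · exact zero_mem _
  mul_mem a b X Y hX hY i j :=
    show ∑ k, X i k * Y k j ∈ F (a + b) from
      sum_mem fun k _ => SetLike.mul_mem_graded (hX i k) (hY k j)

namespace LaurentPolynomial

variable (R : Type*) [Ring R]

def degreeLE (d : ℤ) : AddSubgroup R[T;T⁻¹] where
  carrier := {f | ∀ p, d < p → f.coeff p = 0}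
  add_mem' hf hg p hp := by simp [AddMonoidAlgebra.coeff_add, hf p hp, hg p hp]
  zero_mem' _ _ := rfl
  neg_mem' hf p hp := by simp [hf p hp]

variable {R}

lemma degreeLE_mono : Monotone (degreeLE R) :=
  fun _ _ hde _ hf p hp => hf p (hde.trans_lt hp)

lemma C_mul_T_mem_degreeLE (r : R) (n : ℤ) : C r * T n ∈ degreeLE R n := fun p hp => by
  rw [← single_eq_C_mul_T, AddMonoidAlgebra.coeff_single, Finsupp.single_eq_of_ne hp.ne']

lemma T_mem_degreeLE (n : ℤ) : (T n : R[T;T⁻¹]) ∈ degreeLE R n := by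
  simpa using C_mul_T_mem_degreeLE (1 : R) n

instance : SetLike.GradedMonoid (degreeLE R) where
  one_mem := T_zero (R := R) ▸ T_mem_degreeLE 0
  mul_mem d e f g hf hg p hp := by
    classical
    by_contra hne
    obtain ⟨a, ha, b, hb, rfl⟩ := Finset.mem_add.mp
      (AddMonoidAlgebra.support_coeff_mul_subset f g (Finsupp.mem_support_iff.mpr hne))
    have ha : a ≤ d := not_lt.mp fun h => Finsupp.mem_support_iff.mp ha (hf a h)
    have hb : b ≤ e := not_lt.mp fun h => Finsupp.mem_support_iff.mp hb (hg b h)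
    omega

end LaurentPolynomial

namespace Matrix

variable {ι R : Type*} [DecidableEq ι]

def shiftDiag [Add ι] [Zero R] (d : ι) (h : ι → R) : Matrix ι ι R :=
  of fun i j => if i = j + d then h j else 0

lemma shiftDiag_apply [Add ι] [Zero R] (d : ι) (h : ι → R) (i j : ι) :
    shiftDiag d h i j = if i = j + d then h j else 0 :=
  rfl

lemma sum_single_eq_shiftDiag [Add ι] [Fintype ι] [AddCommMonoid R] (d : ι) (h : ι → R) :
    ∑ k, single (k + d) k (h k) = shiftDiag d h := by
  ext i j
  rw [Matrix.sum_apply, Finset.sum_eq_single j]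
  · simp [single_apply, shiftDiag_apply, eq_comm]
  · intro k _ hk
    simp [hk]
  · simp

lemma shiftDiag_zero [AddZeroClass ι] [Zero R] (h : ι → R) : shiftDiag 0 h = diagonal h := by
  ext i j
  by_cases hij : i = j <;> simp [shiftDiag_apply, hij]

lemma shiftDiag_mul_shiftDiag [AddCommSemigroup ι] [Fintype ι] [NonUnitalNonAssocSemiring R]
    (d e : ι) (h h' : ι → R) :
    shiftDiag d h * shiftDiag e h' = shiftDiag (d + e) fun k => h (k + e) * h' k := by
  ext i j
  rw [mul_apply, Finset.sum_eq_single (j + e)]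
  · simp [shiftDiag_apply, add_assoc, add_comm e d]
  · intro k _ hk
    simp [shiftDiag_apply, hk]
  · simp

lemma shiftDiag_const_pow [AddCommMonoid ι] [Fintype ι] [Semiring R] (d : ι) (a : R) (n : ℕ) :
    shiftDiag d (fun _ => a) ^ n = shiftDiag (n • d) fun _ => a ^ n := by
  induction n with
  | zero => simp [shiftDiag_zero]
  | succ n ih => rw [pow_succ, ih, shiftDiag_mul_shiftDiag, succ_nsmul, pow_succ]

lemma shiftDiag_mem_matrix [Add ι] [AddGroup R] {S : AddSubgroup R} (d : ι) {h : ι → R}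
    (hS : ∀ k, h k ∈ S) : shiftDiag d h ∈ S.matrix := fun i j => by
  rw [shiftDiag_apply]
  split_ifs
  exacts [hS j, zero_mem S]

end Matrix

section Bogoyavlensky

open Fin.CommRing

variable {M : ℕ} [NeZero M]

noncomputable def laxPotential (m : ℕ) (z : Fin M → ℝ) :
    Matrix (Fin M) (Fin M) ℝ[T;T⁻¹] :=
  shiftDiag (-((m - 1 : ℕ) : Fin M)) fun k => C (z (k - (m - 1 : ℕ))) * T (1 - m)

variable (M) in
noncomputable def laxShift : Matrix (Fin M) (Fin M) ℝ[T;T⁻¹] :=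
  shiftDiag 1 fun _ => T 1

lemma TmatL_eq_laxPotential_add_laxShift (m : ℕ) (z : Fin M → ℝ) :
    TmatL m M z = laxPotential m z + laxShift M := by
  rw [TmatL, laxPotential, laxShift, ← sum_single_eq_shiftDiag, ← sum_single_eq_shiftDiag]
  congr 1
  exact Fintype.sum_equiv (Equiv.addRight ((m - 1 : ℕ) : Fin M)) _ _ fun k => by simp

lemma laxShift_pow (n : ℕ) : laxShift M ^ n = shiftDiag (n : Fin M) fun _ => T n := by
  rw [laxShift, shiftDiag_const_pow, nsmul_one, T_pow, mul_one]

lemma laxShift_pow_mul_laxPotential_mul_laxShift_pow (m : ℕ) (z : Fin M → ℝ) {j : ℕ}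
    (hj : j < m) :
    laxShift M ^ j * laxPotential m z * laxShift M ^ (m - 1 - j) =
      diagonal fun k => C (z (k - j)) := by
  rw [laxShift_pow, laxShift_pow, laxPotential, shiftDiag_mul_shiftDiag, shiftDiag_mul_shiftDiag,
    ← shiftDiag_zero]
  have hcast : ((m - 1 - j : ℕ) : Fin M) = ((m - 1 : ℕ) : Fin M) - j := Nat.cast_sub (by omega)
  have hexp : (j : ℤ) + (1 - m) + ((m - 1 - j : ℕ) : ℤ) = 0 := by omega
  congr 1
  · rw [hcast]
    ring
  · funext k
    rw [hcast, show k + (((m - 1 : ℕ) : Fin M) - j) - ((m - 1 : ℕ) : Fin M) = k - j by ring]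
    calc T j * (C (z (k - j)) * T (1 - m)) * T ((m - 1 - j : ℕ) : ℤ)
        = C (z (k - j)) * T (j + (1 - m) + ((m - 1 - j : ℕ) : ℤ)) := by
          rw [T_add, T_add]
          ring
      _ = C (z (k - j)) := by rw [hexp, T_zero, mul_one]

lemma powLinearTerm_laxShift_laxPotential (m : ℕ) (z : Fin M → ℝ) :
    powLinearTerm m (laxShift M) (laxPotential m z) =
      diagonal fun k => C (∑ l ∈ Finset.range m, z (k - l)) := by
  rw [powLinearTerm, Finset.sum_congr rfl fun j hj =>
    laxShift_pow_mul_laxPotential_mul_laxShift_pow m z (Finset.mem_range.mp hj)]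
  ext i j
  simp [Matrix.sum_apply, diagonal_apply]

lemma PmatL_eq (m : ℕ) (z : Fin M → ℝ) :
    PmatL m M z = laxShift M ^ m + powLinearTerm m (laxShift M) (laxPotential m z) := by
  rw [PmatL, sum_single_eq_diagonal, sum_single_eq_shiftDiag, laxShift_pow,
    powLinearTerm_laxShift_laxPotential, add_comm]

lemma laxPotential_mem (m : ℕ) (z : Fin M → ℝ) :
    laxPotential m z ∈ (degreeLE ℝ (1 - m)).matrix :=
  shiftDiag_mem_matrix _ fun _ => C_mul_T_mem_degreeLE _ _

lemma laxShift_mem : laxShift M ∈ (degreeLE ℝ 1).matrix :=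
  shiftDiag_mem_matrix _ fun _ => T_mem_degreeLE 1

end Bogoyavlensky

theorem statement14_general (m M : ℕ) (hm : 2 ≤ m) [NeZero M] (z : Fin M → ℝ) :
    ∀ (i j : Fin M) (p : ℤ), 0 ≤ p →
      (AddMonoidAlgebra.coeff ((TmatL m M z ^ m - PmatL m M z) i j)) p = 0 := by
  intro i j p hp
  have hrem := add_pow_sub_pow_sub_powLinearTerm_mem
    (F := fun d => (degreeLE ℝ d).matrix (m := Fin M) (n := Fin M))
    (fun _ _ hde _ hX i j => degreeLE_mono hde (hX i j)) (by omega : (1 - m : ℤ) ≤ 1)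
    (laxPotential_mem m z) laxShift_mem m
  rw [← TmatL_eq_laxPotential_add_laxShift, sub_sub (TmatL m M z ^ m), ← PmatL_eq] at hrem
  exact hrem i j p (by omega)

/-- Every entry of `T(z,λ)^m − P(z,λ)` has vanishing coefficients at `λ^p` for all `p ≥ 0`;
i.e. `P = (P_+ + P_0)(T^m)` in the grading by powers of `λ`. -/
theorem statement14 (m N M : ℕ) (hm : 2 ≤ m) (hN : 2 ≤ N) (hM : M = m * N) [NeZero M]
    (z : Fin M → ℝ) :
    ∀ (i j : Fin M) (p : ℤ), 0 ≤ p →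
      (AddMonoidAlgebra.coeff ((TmatL m M z ^ m - PmatL m M z) i j)) p = 0 :=
  statement14_general m M hm z
end

section
/- For every z ∈ ℝ^M, every real λ ≠ 0, every μ ∈ ℝ, and every j ∈ {1,…,m}, the N×N submatrix of T(z,λ)^m − μ·I_M formed by the rows and columns with indices j, m+j, 2m+j, …, m(N−1)+j (in this order) is equal to L_j(λ^m) − μ·I_N. -/
/-!
Write `S` for the cyclic shift `Σ_k E_{k+1,k}`. Then `T(z,λ) = λ S W_1` with
`W_s = I + λ^{-m} Σ_k z_{k+s} E_{k,k+m}`, and `W_s S = S W_{s+1}`, so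
`T^m = λ^m S^m W_m ⋯ W_1`.
Each of these factors maps the residue class `j - 1 + mℤ` of indices into itself, so the
submatrix on that class is the product of the submatrices: `S^m` becomes the `N × N` shift `S`,
and `W_s` becomes `V_{j+s}` when `j + s ≤ m` and `S⁻¹ V_{j+s-m} S` otherwise. Moving `S` across
the latter factors and using `U_1 = λ V_1 S` gives `L_j`.
-/

open Matrix
open Fin.NatCast

/-- The periodic Bogoyavlensky Lax matrix
`T(z,λ) = λ^{1−m} Σ_k z_k E_{k,k+m−1} + λ Σ_k E_{k+1,k}` (indices mod M), real λ. -/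
noncomputable def Tm (m M : ℕ) [NeZero M] (z : Fin M → ℝ) (lam : ℝ) :
    Matrix (Fin M) (Fin M) ℝ :=
  lam ^ ((1 : ℤ) - (m : ℤ)) • (∑ k : Fin M, Matrix.single k (k + ((m - 1 : ℕ) : Fin M)) (z k))
    + lam • ∑ k : Fin M, Matrix.single (k + 1) k 1

/-- `v_k^{(j)} = z_{m(k−1)+j}` (here `k : Fin N` is 0-based, `j` is 1-based). -/
def vv (m : ℕ) (N M : ℕ) [NeZero M] (z : Fin M → ℝ) (j : ℕ) (k : Fin N) : ℝ :=
  z ((m * k.val + (j - 1) : ℕ) : Fin M)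

/-- `U_1(λ) = λ Σ_k E_{k+1,k} + Σ_k v_k^{(1)} E_{kk}` (indices mod N). -/
noncomputable def U1 (m N M : ℕ) [NeZero N] [NeZero M] (z : Fin M → ℝ) (lam : ℝ) :
    Matrix (Fin N) (Fin N) ℝ :=
  lam • (∑ k : Fin N, Matrix.single (k + 1) k 1)
    + ∑ k : Fin N, Matrix.single k k (vv m N M z 1 k)

/-- `V_j(λ) = I + λ⁻¹ Σ_k v_k^{(j)} E_{k,k+1}` (indices mod N, `j` 1-based). -/
noncomputable def Vm (m N M : ℕ) [NeZero N] [NeZero M] (z : Fin M → ℝ) (j : ℕ) (lam : ℝ) :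
    Matrix (Fin N) (Fin N) ℝ :=
  1 + lam⁻¹ • ∑ k : Fin N, Matrix.single k (k + 1) (vv m N M z j k)

/-- `L_j(λ) = V_j ⬝ ⋯ ⬝ V_2 ⬝ U_1 ⬝ V_m ⬝ ⋯ ⬝ V_{j+1}` (`j` 1-based, `1 ≤ j ≤ m`). -/
noncomputable def Lm (m N M : ℕ) [NeZero N] [NeZero M] (z : Fin M → ℝ) (j : ℕ) (lam : ℝ) :
    Matrix (Fin N) (Fin N) ℝ :=
  (((List.range' 2 (j - 1)).reverse.map (fun t => Vm m N M z t lam)).prod)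
    * U1 m N M z lam
    * (((List.range' (j + 1) (m - j)).reverse.map (fun t => Vm m N M z t lam)).prod)

theorem SemiconjBy.list_prod_map {M α : Type*} [Monoid M] {a : M} {f g : α → M} {l : List α}
    (h : ∀ x ∈ l, SemiconjBy a (f x) (g x)) : SemiconjBy a (l.map f).prod (l.map g).prod := by
  induction l with
  | nil => exact SemiconjBy.one_right a
  | cons x l ih =>
    simp only [List.map_cons, List.prod_cons]
    exact (h x (by simp)).mul_right (ih fun y hy => h y (by simp [hy]))

theorem mul_pow_eq_pow_mul_prod_range' {M : Type*} [Monoid M] (s : M) (f : ℕ → M)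
    (hf : ∀ r, SemiconjBy s (f (r + 1)) (f r)) (a n : ℕ) :
    (s * f a) ^ n = s ^ n * ((List.range' a n).reverse.map f).prod := by
  induction n generalizing a with
  | zero => simp
  | succ n ih =>
    have hs : SemiconjBy s ((List.range' (a + 1) n).reverse.map f).prod
        ((List.range' a n).reverse.map f).prod := by
      rw [List.range'_succ_left, ← List.map_reverse, List.map_map]
      exact SemiconjBy.list_prod_map fun r _ => hf r
    rw [pow_succ, ih, mul_assoc, ← mul_assoc _ s, ← hs.eq, List.range'_succ]
    simp [pow_succ, mul_assoc]

theorem Matrix.submatrix_mul_of_row_support {l m n o p R : Type*} [Fintype m] [Fintype n]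
    [NonUnitalNonAssocSemiring R] (A : Matrix m m R) (B : Matrix m o R) (e₁ : l → m)
    {e₂ : n → m} (he₂ : Function.Injective e₂) (e₃ : p → o)
    (hA : ∀ i b, A (e₁ i) b ≠ 0 → b ∈ Set.range e₂) :
    (A * B).submatrix e₁ e₃ = A.submatrix e₁ e₂ * B.submatrix e₂ e₃ := by
  ext i k
  simp only [Matrix.submatrix_apply, Matrix.mul_apply]
  refine (Fintype.sum_of_injective e₂ he₂ _ _ (fun b hb => ?_) fun _ => rfl).symm
  exact mul_eq_zero_of_left (not_imp_comm.mp (hA i b) hb) _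

theorem Matrix.submatrix_list_prod_of_row_support {m n R : Type*} [Fintype m] [Fintype n]
    [DecidableEq m] [DecidableEq n] [Semiring R] {e : n → m} (he : Function.Injective e)
    (l : List (Matrix m m R)) (hl : ∀ A ∈ l, ∀ i b, A (e i) b ≠ 0 → b ∈ Set.range e) :
    l.prod.submatrix e e = (l.map (·.submatrix e e)).prod := by
  induction l with
  | nil => exact Matrix.submatrix_one e he
  | cons A l ih =>
    rw [List.prod_cons, Matrix.submatrix_mul_of_row_support _ _ _ he _ (hl A (by simp)),
      ih fun B hB => hl B (by simp [hB]), List.map_cons, List.prod_cons]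

namespace Bogoyavlensky

open Function

section Generic

variable {G H R : Type*} [Semiring R]

theorem sum_single_apply_of_row {ι : Type*} [Fintype ι] [DecidableEq ι] (f : ι → ι)
    (c : ι → R) (a b : ι) :
    (∑ k, Matrix.single k (f k) (c k)) a b = if f a = b then c a else 0 := by
  simp [Matrix.sum_apply, Matrix.single_apply, ite_and]

theorem sum_single_apply_of_col {ι : Type*} [Fintype ι] [DecidableEq ι] (f : ι → ι)
    (c : ι → R) (a b : ι) :
    (∑ k, Matrix.single (f k) k (c k)) a b = if f b = a then c b else 0 := by
  simp [Matrix.sum_apply, Matrix.single_apply, ite_and, and_comm]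

variable [AddCommGroup G] [Fintype G] [DecidableEq G]

variable (R) in
def shift (g : G) : Matrix G G R := ∑ k, Matrix.single (k + g) k 1

theorem shift_apply (g a b : G) : shift R g a b = if b + g = a then 1 else 0 :=
  sum_single_apply_of_col _ _ a b

theorem shift_mul_apply (g : G) (A : Matrix G G R) (a b : G) :
    (shift R g * A) a b = A (a - g) b := by
  simp [Matrix.mul_apply, shift_apply, ← eq_sub_iff_add_eq]

theorem mul_shift_apply (g : G) (A : Matrix G G R) (a b : G) :
    (A * shift R g) a b = A a (b + g) := by
  simp [Matrix.mul_apply, shift_apply]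

theorem shift_mul_shift (g h : G) : shift R g * shift R h = shift R (g + h) := by
  ext a b
  simp only [shift_mul_apply, shift_apply, eq_sub_iff_add_eq, add_assoc, add_comm h]

theorem shift_pow (g : G) (n : ℕ) : shift R g ^ n = shift R (n • g) := by
  induction n with
  | zero => ext a b; simp [shift_apply, Matrix.one_apply, eq_comm]
  | succ n ih => rw [pow_succ, ih, shift_mul_shift, succ_nsmul]

/-- Both `V_j` (with `d = 1`) and the factors `W_s` of `T` have this shape. -/
def band (d : G) (c : R) (w : G → R) : Matrix G G R :=
  1 + c • ∑ k, Matrix.single k (k + d) (w k)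

theorem band_apply (d : G) (c : R) (w : G → R) (a b : G) :
    band d c w a b = (if a = b then 1 else 0) + c * (if a + d = b then w a else 0) := by
  rw [band, Matrix.add_apply, Matrix.smul_apply, sum_single_apply_of_row, Matrix.one_apply,
    smul_eq_mul]

theorem band_mul_shift (d g : G) (c : R) (w : G → R) :
    band d c w * shift R g = shift R g * band d c (fun k => w (k + g)) := by
  ext a b
  simp only [shift_mul_apply, mul_shift_apply, band_apply, sub_add_cancel, sub_add_eq_add_sub,
    sub_eq_iff_eq_add]

variable [AddCommGroup H] {e : H → G} {g : G} {h : H}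

theorem shift_row_support (he : ∀ p, e (p + h) = e p + g) (p : H) (b : G)
    (hb : shift R g (e p) b ≠ 0) : b ∈ Set.range e := by
  refine ⟨p - h, add_right_cancel (b := g) ?_⟩
  rw [← he, sub_add_cancel]
  by_contra hne
  exact hb (by rw [shift_apply, if_neg (Ne.symm hne)])

theorem band_row_support (he : ∀ p, e (p + h) = e p + g) (c : R) (w : G → R) (p : H) (b : G)
    (hb : band g c w (e p) b ≠ 0) : b ∈ Set.range e := by
  by_cases h₀ : e p = b
  · exact ⟨p, h₀⟩
  by_cases h₁ : e p + g = b
  · exact ⟨p + h, by rw [he, h₁]⟩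
  simp [band_apply, h₀, h₁] at hb

variable [Fintype H] [DecidableEq H]

theorem submatrix_shift (he : Injective e) (hshift : ∀ p, e (p + h) = e p + g) :
    (shift R g).submatrix e e = shift R h := by
  ext p q
  simp only [Matrix.submatrix_apply, shift_apply, ← hshift, he.eq_iff]

theorem submatrix_band (he : Injective e) (hshift : ∀ p, e (p + h) = e p + g) (c : R)
    (w : G → R) : (band g c w).submatrix e e = band h c (w ∘ e) := by
  ext p q
  simp only [Matrix.submatrix_apply, band_apply, ← hshift, he.eq_iff, Function.comp_apply]

end Generic

section Residue

variable {m N M : ℕ} [NeZero M]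

def residueEmb (m M : ℕ) [NeZero M] (r : ℕ) {N : ℕ} (k : Fin N) : Fin M :=
  ((m * k.val + r : ℕ) : Fin M)

theorem residueEmb_add_natCast (r s : ℕ) (k : Fin N) :
    residueEmb m M r k + (s : Fin M) = residueEmb m M (r + s) k := by
  simp only [residueEmb, Nat.cast_add, add_assoc]

theorem residueEmb_add_one [NeZero N] (hM : M = m * N) (r : ℕ) (k : Fin N) :
    residueEmb m M r (k + 1) = residueEmb m M (r + m) k := by
  apply Fin.ext
  simp only [residueEmb, Fin.val_natCast, Fin.val_add, Fin.val_one']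
  subst hM
  have hk : (k.val + 1 % N) % N ≡ k.val + 1 [MOD N] :=
    (Nat.mod_modEq _ N).trans ((Nat.mod_modEq 1 N).add_left k.val)
  refine ((hk.mul_left' m).add_right r).trans ?_
  rw [show m * (k.val + 1) + r = m * k.val + (r + m) by ring]

theorem residueEmb_add_one_eq_add [NeZero N] (hM : M = m * N) (r : ℕ) (k : Fin N) :
    residueEmb m M r (k + 1) = residueEmb m M r k + (m : Fin M) := by
  rw [residueEmb_add_one hM, residueEmb_add_natCast]

theorem residueEmb_injective (hM : M = m * N) {r : ℕ} (hr : r < m) :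
    Injective (residueEmb m M r (N := N)) := by
  subst hM
  have hlt : ∀ k : Fin N, m * k.val + r < m * N := fun k => by
    have := Nat.mul_le_mul_left m k.isLt
    rw [Nat.mul_succ] at this
    omega
  intro p q hpq
  have hval := congrArg Fin.val hpq
  simp only [residueEmb, Fin.val_natCast, Nat.mod_eq_of_lt (hlt p), Nat.mod_eq_of_lt (hlt q)]
    at hval
  exact Fin.ext (Nat.eq_of_mul_eq_mul_left (show 0 < m by omega)
    (show m * p.val = m * q.val by omega))

end Residue

section Factorization

variable {m N M : ℕ} [NeZero M] (z : Fin M → ℝ)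

/-- The factor `W_s` of the factorization `T(z,λ) = λ S W_1`, for `c = λ^{-m}`. -/
def laxFactor (m : ℕ) (z : Fin M → ℝ) (c : ℝ) (s : ℕ) : Matrix (Fin M) (Fin M) ℝ :=
  band (m : Fin M) c (fun k => z (k + s))

theorem Tm_eq_smul_shift_mul (hm : 1 ≤ m) {lam : ℝ} (hlam : lam ≠ 0) :
    Tm m M z lam = lam • (shift ℝ 1 * laxFactor m z (lam ^ m)⁻¹ 1) := by
  have hcast : ((m - 1 : ℕ) : Fin M) = (m : Fin M) - 1 := by
    rw [eq_sub_iff_add_eq, ← Nat.cast_add_one, Nat.sub_add_cancel hm]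
  have hpow : lam ^ ((1 : ℤ) - m) = lam * (lam ^ m)⁻¹ := by
    rw [zpow_sub₀ hlam, zpow_one, zpow_natCast, div_eq_mul_inv]
  ext a b
  simp only [Tm, Matrix.add_apply, Matrix.smul_apply, sum_single_apply_of_row,
    sum_single_apply_of_col, shift_mul_apply, laxFactor, band_apply, smul_eq_mul, hcast, hpow,
    Nat.cast_one, sub_add_cancel, sub_eq_iff_eq_add, sub_add_eq_add_sub, add_sub_assoc,
    @eq_comm _ (b + 1)]
  ring

theorem laxFactor_mul_shift (c : ℝ) (s : ℕ) :
    laxFactor m z c s * shift ℝ 1 = shift ℝ 1 * laxFactor m z c (s + 1) := by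
  simp only [laxFactor, band_mul_shift, Nat.cast_succ, add_assoc, add_comm (1 : Fin M)]

theorem Tm_pow_eq (hm : 1 ≤ m) {lam : ℝ} (hlam : lam ≠ 0) (n : ℕ) :
    Tm m M z lam ^ n = lam ^ n •
      (shift ℝ 1 ^ n * ((List.range' 1 n).reverse.map (laxFactor m z (lam ^ m)⁻¹)).prod) := by
  rw [Tm_eq_smul_shift_mul z hm hlam, smul_pow,
    mul_pow_eq_pow_mul_prod_range' _ _ fun r => (laxFactor_mul_shift z _ r).symm]

theorem submatrix_laxFactor [NeZero N] (hM : M = m * N) {r : ℕ} (hr : r < m) (c : ℝ)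
    (s : ℕ) :
    (laxFactor m z c s).submatrix (residueEmb m M r) (residueEmb m M r)
      = band (1 : Fin N) c fun p => z (residueEmb m M (r + s) p) := by
  rw [laxFactor, submatrix_band (residueEmb_injective hM hr) (residueEmb_add_one_eq_add hM r)]
  simp only [Function.comp_def, residueEmb_add_natCast]

theorem submatrix_Tm_pow_eq_smul [NeZero N] (hM : M = m * N) {r : ℕ} (hr : r < m) {lam : ℝ}
    (hlam : lam ≠ 0) :
    (Tm m M z lam ^ m).submatrix (residueEmb m M r) (residueEmb m M r) = lam ^ m • (shift ℝ 1 *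
      ((List.range' 1 m).reverse.map fun s => band (1 : Fin N) (lam ^ m)⁻¹
        fun p => z (residueEmb m M (r + s) p)).prod) := by
  have hinj := residueEmb_injective hM hr (N := N)
  have hshift := residueEmb_add_one_eq_add hM r (N := N)
  rw [Tm_pow_eq z (by omega) hlam, shift_pow, nsmul_one, Matrix.submatrix_smul, Pi.smul_apply,
    Pi.smul_apply,
    Matrix.submatrix_mul_of_row_support _ _ _ hinj _ (shift_row_support hshift),
    submatrix_shift hinj hshift,
    Matrix.submatrix_list_prod_of_row_support hinj _ ?support, List.map_map]
  · simp only [Function.comp_def, submatrix_laxFactor z hM hr]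
  · simp only [List.forall_mem_map]
    exact fun s _ => band_row_support hshift _ _

end Factorization

section Restriction

variable {m N M : ℕ} [NeZero N] [NeZero M] (z : Fin M → ℝ)

theorem Vm_eq_band (t : ℕ) (Λ : ℝ) :
    Vm m N M z t Λ = band 1 Λ⁻¹ fun p => z (residueEmb m M (t - 1) p) :=
  rfl

theorem U1_eq_smul {Λ : ℝ} (hΛ : Λ ≠ 0) :
    U1 m N M z Λ = Λ • (Vm m N M z 1 Λ * shift ℝ 1) := by
  ext p q
  simp only [U1, Vm_eq_band, Matrix.add_apply, Matrix.smul_apply, sum_single_apply_of_col,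
    mul_shift_apply, band_apply, smul_eq_mul, vv]
  rw [mul_add, ← mul_assoc, mul_inv_cancel₀ hΛ, one_mul]
  rcases eq_or_ne p q with rfl | hpq
  · simp [residueEmb]
  · simp [hpq, hpq.symm, @eq_comm _ p]

theorem map_band_range'_eq_map_Vm {j : ℕ} (hj : 1 ≤ j) (n : ℕ) (Λ : ℝ) :
    (List.range' 1 n).reverse.map
        (fun s => band (1 : Fin N) Λ⁻¹ fun p => z (residueEmb m M (j - 1 + s) p))
      = (List.range' (j + 1) n).reverse.map fun t => Vm m N M z t Λ := by
  rw [← List.map_add_range' (a := j) 1 n 1, ← List.map_reverse, List.map_map]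
  refine List.map_congr_left fun s _ => ?_
  rw [Function.comp_apply, Vm_eq_band, show j + s - 1 = j - 1 + s by omega]

theorem shift_mul_prod_band_eq {j : ℕ} (hM : M = m * N) (hj1 : 1 ≤ j) (hjm : j ≤ m)
    (Λ : ℝ) :
    shift ℝ 1 * ((List.range' (1 + (m - j)) j).reverse.map fun s =>
        band (1 : Fin N) Λ⁻¹ fun p => z (residueEmb m M (j - 1 + s) p)).prod
      = ((List.range' 1 j).reverse.map fun t => Vm m N M z t Λ).prod * shift ℝ 1 := by
  rw [add_comm 1, ← List.map_add_range' (a := m - j) 1 j 1, ← List.map_reverse, List.map_map]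
  refine SemiconjBy.list_prod_map fun t ht => ?_
  rw [List.mem_reverse, List.mem_range'_1] at ht
  simp only [SemiconjBy, Function.comp_apply, Vm_eq_band, band_mul_shift, residueEmb_add_one hM]
  rw [show t - 1 + m = j - 1 + (m - j + t) by omega]

theorem submatrix_Tm_pow_eq_Lm (hM : M = m * N) {lam : ℝ} (hlam : lam ≠ 0) {j : ℕ}
    (hj1 : 1 ≤ j) (hjm : j ≤ m) :
    (Tm m M z lam ^ m).submatrix (residueEmb m M (j - 1)) (residueEmb m M (j - 1))
      = Lm m N M z j (lam ^ m) := by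
  have hsplit : List.range' 1 m = List.range' 1 (m - j) ++ List.range' (1 + (m - j)) j := by
    have := List.range'_append (s := 1) (m := m - j) (n := j) (step := 1)
    rw [one_mul, Nat.sub_add_cancel hjm] at this
    exact this.symm
  have hV : List.range' 1 j = 1 :: List.range' 2 (j - 1) := by
    conv_lhs => rw [← Nat.sub_add_cancel hj1]
    exact List.range'_succ
  rw [submatrix_Tm_pow_eq_smul z hM (show j - 1 < m by omega) hlam, hsplit, List.reverse_append,
    List.map_append, List.prod_append, ← mul_assoc, shift_mul_prod_band_eq z hM hj1 hjm,
    map_band_range'_eq_map_Vm z hj1, hV, Lm, U1_eq_smul z (pow_ne_zero m hlam)]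
  simp only [List.reverse_cons, List.map_append, List.map_cons, List.map_nil, List.prod_append,
    List.prod_cons, List.prod_nil, mul_one, Matrix.mul_smul, Matrix.smul_mul, mul_assoc]

end Restriction

end Bogoyavlensky

theorem statement15_general (m N M : ℕ) (hM : M = m * N)
    [NeZero N] [NeZero M]
    (z : Fin M → ℝ) (lam : ℝ) (hlam : lam ≠ 0) (μ : ℝ) (j : ℕ) (hj1 : 1 ≤ j) (hjm : j ≤ m) :
    (Tm m M z lam ^ m - μ • (1 : Matrix (Fin M) (Fin M) ℝ)).submatrix
        (fun k : Fin N => ((m * k.val + (j - 1) : ℕ) : Fin M))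
        (fun k : Fin N => ((m * k.val + (j - 1) : ℕ) : Fin M))
      = Lm m N M z j (lam ^ m) - μ • (1 : Matrix (Fin N) (Fin N) ℝ) := by
  let e := Bogoyavlensky.residueEmb m M (j - 1) (N := N)
  change (Tm m M z lam ^ m - μ • 1).submatrix e e = _
  rw [Matrix.submatrix_sub, Pi.sub_apply, Pi.sub_apply, Matrix.submatrix_smul, Pi.smul_apply,
    Pi.smul_apply, Matrix.submatrix_one e (Bogoyavlensky.residueEmb_injective hM (by omega)),
    Bogoyavlensky.submatrix_Tm_pow_eq_Lm z hM hlam hj1 hjm]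

/-- The N×N submatrix of `T(z,λ)^m − μI` on the rows and columns
`j, m+j, …, m(N−1)+j` equals `L_j(λ^m) − μI`. -/
theorem statement15 (m N M : ℕ) (hm : 2 ≤ m) (hN : 2 ≤ N) (hM : M = m * N)
    [NeZero N] [NeZero M]
    (z : Fin M → ℝ) (lam : ℝ) (hlam : lam ≠ 0) (μ : ℝ) (j : ℕ) (hj1 : 1 ≤ j) (hjm : j ≤ m) :
    (Tm m M z lam ^ m - μ • (1 : Matrix (Fin M) (Fin M) ℝ)).submatrix
        (fun k : Fin N => ((m * k.val + (j - 1) : ℕ) : Fin M))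
        (fun k : Fin N => ((m * k.val + (j - 1) : ℕ) : Fin M))
      = Lm m N M z j (lam ^ m) - μ • (1 : Matrix (Fin N) (Fin N) ℝ) :=
  statement15_general m N M hM z lam hlam μ j hj1 hjm
end

section
/- Let N ≥ 2, u, v ∈ ℝ^N (indices mod N), and λ a nonzero real. Define N×N matrices (indices cyclic mod N): U(u,λ) = λ Σ_{k=1}^{N} E_{k+1,k} + Σ_{k=1}^{N} u_k E_{kk}; V(v,λ) = I + λ⁻¹ Σ_{k=1}^{N} v_k E_{k,k+1}; L_1(u,v,λ) = λ Σ_{k=1}^{N} E_{k+1,k} + Σ_{k=1}^{N} (u_k + v_{k−1}) E_{kk} + λ⁻¹ Σ_{k=1}^{N} u_k v_k E_{k,k+1}; L_2(u,v,λ) = λ Σ_{k=1}^{N} E_{k+1,k} + Σ_{k=1}^{N} (u_k + v_k) E_{kk} + λ⁻¹ Σ_{k=1}^{N} u_{k+1} v_k E_{k,k+1}. Then L_1(u,v,λ) = U(u,λ)⬝V(v,λ) and L_2(u,v,λ) = V(v,λ)⬝U(u,λ); consequently det(L_1(u,v,λ) − μ·I_N) = det(L_2(u,v,λ) − μ·I_N)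 for every μ ∈ ℝ. -/
open Matrix

/-- `U(u,λ) = λ Σ_k E_{k+1,k} + Σ_k u_k E_{kk}` (indices cyclic mod N). -/
noncomputable def Umat (N : ℕ) [NeZero N] (u : Fin N → ℝ) (lam : ℝ) :
    Matrix (Fin N) (Fin N) ℝ :=
  lam • (∑ k : Fin N, Matrix.single (k + 1) k 1)
    + ∑ k : Fin N, Matrix.single k k (u k)

/-- `V(v,λ) = I + λ⁻¹ Σ_k v_k E_{k,k+1}` (indices cyclic mod N). -/
noncomputable def Vmat (N : ℕ) [NeZero N] (v : Fin N → ℝ) (lam : ℝ) :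
    Matrix (Fin N) (Fin N) ℝ :=
  1 + lam⁻¹ • ∑ k : Fin N, Matrix.single k (k + 1) (v k)

/-- `L_1(u,v,λ) = λ Σ_k E_{k+1,k} + Σ_k (u_k + v_{k−1}) E_{kk} + λ⁻¹ Σ_k u_k v_k E_{k,k+1}`. -/
noncomputable def L1mat (N : ℕ) [NeZero N] (u v : Fin N → ℝ) (lam : ℝ) :
    Matrix (Fin N) (Fin N) ℝ :=
  lam • (∑ k : Fin N, Matrix.single (k + 1) k 1)
    + (∑ k : Fin N, Matrix.single k k (u k + v (k - 1)))
    + lam⁻¹ • ∑ k : Fin N, Matrix.single k (k + 1) (u k * v k)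

/-- `L_2(u,v,λ) = λ Σ_k E_{k+1,k} + Σ_k (u_k + v_k) E_{kk} + λ⁻¹ Σ_k u_{k+1} v_k E_{k,k+1}`. -/
noncomputable def L2mat (N : ℕ) [NeZero N] (u v : Fin N → ℝ) (lam : ℝ) :
    Matrix (Fin N) (Fin N) ℝ :=
  lam • (∑ k : Fin N, Matrix.single (k + 1) k 1)
    + (∑ k : Fin N, Matrix.single k k (u k + v k))
    + lam⁻¹ • ∑ k : Fin N, Matrix.single k (k + 1) (u (k + 1) * v k)

/-! Writing `S = Σ E_{k+1,k}`, `D_w = Σ w_k E_{kk}` and `T_w = Σ w_k E_{k,k+1}`, both `U = λS + D_u`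
and `V = 1 + λ⁻¹T_v` are sums of weighted cyclic shifts, and a product of two such shifts is again
one: `S T_v = D_{v(· - 1)}`, `T_v S = D_v`, `D_u T_v = T_{u v}`, `T_v D_u = T_{v u(· + 1)}`. Expanding
`UV` and `VU` gives `L₁` and `L₂`. Finally `AB` and `BA` have the same characteristic polynomial. -/

namespace Matrix

variable {ι α : Type*} [Fintype ι] [DecidableEq ι]

theorem sum_single_mul_sum_single [NonUnitalNonAssocSemiring α]
    (r c d : ι → ι) (e : ι ≃ ι) (a b : ι → α) :
    (∑ k, single (r k) (c k) (a k)) * (∑ k, single (e k) (d k) (b k))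
      = ∑ k, single (r k) (d (e.symm (c k))) (a k * b (e.symm (c k))) := by
  rw [Finset.sum_mul_sum]
  refine Finset.sum_congr rfl fun i _ => ?_
  rw [Finset.sum_eq_single (e.symm (c i))]
  · simp
  · intro j _ hj
    exact single_mul_single_of_ne (h := fun h => hj (e.eq_symm_apply.mpr h.symm)) ..
  · simp

theorem det_mul_sub_smul_one_comm {R : Type*} [CommRing R] (A B : Matrix ι ι R) (μ : R) :
    (A * B - μ • (1 : Matrix ι ι R)).det = (B * A - μ • (1 : Matrix ι ι R)).det := by
  have det_eq (M : Matrix ι ι R) :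
      (M - μ • (1 : Matrix ι ι R)).det = (-1) ^ Fintype.card ι * M.charpoly.eval μ := by
    rw [eval_charpoly, ← det_neg, neg_sub, smul_one_eq_diagonal]
    rfl
  rw [det_eq, det_eq, charpoly_mul_comm]

end Matrix

section CyclicShift

open Matrix

variable {N : ℕ} [NeZero N]

theorem Umat_mul_Vmat (u v : Fin N → ℝ) {lam : ℝ} (hlam : lam ≠ 0) :
    Umat N u lam * Vmat N v lam = L1mat N u v lam := by
  have hST : (∑ k : Fin N, single (k + 1) k (1 : ℝ)) * ∑ k : Fin N, single k (k + 1) (v k)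
      = ∑ k : Fin N, single k k (v (k - 1)) := by
    have h := sum_single_mul_sum_single (· + 1) id (· + 1) (.refl (Fin N)) (fun _ => 1) v
    simp only [Equiv.refl_symm, Equiv.refl_apply, id, one_mul] at h
    rw [h]
    exact Fintype.sum_equiv (Equiv.addRight 1) _ _ fun k => by simp
  have hDT := sum_single_mul_sum_single id id (· + 1) (.refl (Fin N)) u v
  simp only [Equiv.refl_symm, Equiv.refl_apply, id] at hDT
  rw [Umat, Vmat, L1mat, add_mul, mul_add, mul_add, mul_one, mul_one, Matrix.mul_smul,
    Matrix.mul_smul, Matrix.smul_mul, smul_smul, inv_mul_cancel₀ hlam, one_smul, hST, hDT]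
  simp only [single_add, Finset.sum_add_distrib]
  abel

theorem Vmat_mul_Umat (u v : Fin N → ℝ) {lam : ℝ} (hlam : lam ≠ 0) :
    Vmat N v lam * Umat N u lam = L2mat N u v lam := by
  have hTS := sum_single_mul_sum_single id (· + 1) id (.addRight (1 : Fin N)) v fun _ => (1 : ℝ)
  have hTD := sum_single_mul_sum_single id (· + 1) id (.refl (Fin N)) v u
  simp only [Equiv.refl_symm, Equiv.refl_apply, Equiv.addRight_symm, Equiv.coe_addRight, id,
    add_neg_cancel_right, mul_one] at hTS hTD
  rw [Umat, Vmat, L2mat, mul_add, add_mul, add_mul, one_mul, one_mul, Matrix.smul_mul,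
    Matrix.smul_mul, Matrix.mul_smul, smul_smul, inv_mul_cancel₀ hlam, one_smul, hTS, hTD]
  simp only [single_add, Finset.sum_add_distrib, mul_comm (u _)]
  abel

end CyclicShift

theorem statement18_general (N : ℕ) [NeZero N]
    (u v : Fin N → ℝ) (lam : ℝ) (hlam : lam ≠ 0) :
    L1mat N u v lam = Umat N u lam * Vmat N v lam
    ∧ L2mat N u v lam = Vmat N v lam * Umat N u lam
    ∧ ∀ μ : ℝ,
        (L1mat N u v lam - μ • (1 : Matrix (Fin N) (Fin N) ℝ)).det
          = (L2mat N u v lam - μ • (1 : Matrix (Fin N) (Fin N) ℝ)).det := by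
  rw [← Umat_mul_Vmat u v hlam, ← Vmat_mul_Umat u v hlam]
  exact ⟨rfl, rfl, det_mul_sub_smul_one_comm _ _⟩

theorem statement18 (N : ℕ) (hN : 2 ≤ N) [NeZero N]
    (u v : Fin N → ℝ) (lam : ℝ) (hlam : lam ≠ 0) :
    L1mat N u v lam = Umat N u lam * Vmat N v lam
    ∧ L2mat N u v lam = Vmat N v lam * Umat N u lam
    ∧ ∀ μ : ℝ,
        (L1mat N u v lam - μ • (1 : Matrix (Fin N) (Fin N) ℝ)).det
          = (L2mat N u v lam - μ • (1 : Matrix (Fin N) (Fin N) ℝ)).det :=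
  statement18_general N u v lam hlam
end
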